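/- arXiv:1303.0412 — 2 statements merged into one kernel-verified Lean document; each statement's English description precedes it below -/
import Mathlib

section
/- Let V be a group variety and n ≥ 1. The set of isomorphism types of n-marked V-groups is clopen in G_n (with the Stone topology) if and only if the relatively free group of rank n in V is finitely presented. -/
open FirstOrder FirstOrder.Language

universe u v

/-- An `L`-structure is *minimal* if it has no proper substructure; equivalently,
it is generated by the empty set. -/
def FirstOrder.Language.IsMinimal (L : FirstOrder.Language.{u, v}) (M : Type w) [L.Structure M] :
    Prop :=
  Substructure.closure L (∅ : Set M) = ⊤

/-- `qf L M` is the quantifier-free theory of `M`: the set of quantifier-free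
`L`-sentences true in `M`. -/
def FirstOrder.Language.qf (L : FirstOrder.Language.{u, v}) (M : Type w) [L.Structure M] :
    Set L.Sentence :=
  {φ : L.Sentence | BoundedFormula.IsQF φ ∧ M ⊨ φ}

/-- `SL L` is the set of isomorphism types of minimal `L`-structures, identified with
the quantifier-free theories of minimal `L`-structures (equivalently, with the maximal
finitely satisfiable sets of quantifier-free `L`-sentences). -/
def SL (L : FirstOrder.Language.{u, v}) : Type (max u v) :=
  {S : Set L.Sentence // ∃ (M : Type (max u v)) (_ : L.Structure M), L.IsMinimal M ∧ S = L.qf M}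

/-- The basic set `U_φ = {S ∈ S_L : φ ∈ S}`. -/
def USet {L : FirstOrder.Language.{u, v}} (φ : L.Sentence) : Set (SL L) :=
  {S : SL L | φ ∈ S.1}

/-- The Stone topology `τ` on `S_L`, with basis `{U_φ : φ ∈ QF(L)}`. -/
instance stoneTopology (L : FirstOrder.Language.{u, v}) : TopologicalSpace (SL L) :=
  TopologicalSpace.generateFrom
    {V : Set (SL L) | ∃ φ : L.Sentence, BoundedFormula.IsQF φ ∧ V = USet φ}

/-- The function symbols of the language of groups: a binary multiplication, a unary inverse and
a constant `e`. -/
def grpFun : ℕ → Type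
  | 0 => Unit
  | 1 => Unit
  | 2 => Unit
  | _ => Empty

/-- The first-order language `L₀ = {·, ⁻¹, e}` of groups. -/
def grpL : FirstOrder.Language.{0, 0} := ⟨grpFun, fun _ => Empty⟩

/-- The multiplication of a structure for the language of groups with constants. -/
noncomputable def gmul (C : Type) {M : Type} [(grpL[[C]]).Structure M] (x y : M) : M :=
  Structure.funMap (L := grpL[[C]]) (Sum.inl (α := grpL.Functions 2) (() : grpFun 2)) ![x, y]

/-- The inverse operation of a structure for the language of groups with constants. -/
noncomputable def ginv (C : Type) {M : Type} [(grpL[[C]]).Structure M] (x : M) : M :=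
  Structure.funMap (L := grpL[[C]]) (Sum.inl (α := grpL.Functions 1) (() : grpFun 1)) ![x]

/-- The identity element of a structure for the language of groups with constants. -/
noncomputable def gone (C : Type) (M : Type) [(grpL[[C]]).Structure M] : M :=
  Structure.funMap (L := grpL[[C]]) (Sum.inl (α := grpL.Functions 0) (() : grpFun 0)) ![]

/-- The `L₀`-reduct of `M` is a group. -/
def IsGroupReduct (C : Type) (M : Type) [(grpL[[C]]).Structure M] : Prop :=
  (∀ x y z : M, gmul C (gmul C x y) z = gmul C x (gmul C y z)) ∧
  (∀ x : M, gmul C (gone C M) x = x) ∧ (∀ x : M, gmul C x (gone C M) = x) ∧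
  (∀ x : M, gmul C (ginv C x) x = gone C M) ∧ (∀ x : M, gmul C x (ginv C x) = gone C M)

/-- `G_C`, the set of isomorphism types of `C`-marked groups: quantifier-free theories of
minimal `grpL[[C]]`-structures whose `L₀`-reduct is a group. -/
def GC (C : Type) : Set (SL (grpL[[C]])) :=
  {S : SL (grpL[[C]]) |
    ∃ (M : Type) (_ : (grpL[[C]]).Structure M),
      (grpL[[C]]).IsMinimal M ∧ IsGroupReduct C M ∧ S.1 = (grpL[[C]]).qf M}

/-- A group `G` lies in the variety determined by a set `W ⊆ F_∞` of group identities iff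
`φ w = 1` for every `w ∈ W` and every homomorphism `φ : F_∞ → G`. -/
def InVariety (W : Set (FreeGroup ℕ)) (G : Type*) [Group G] : Prop :=
  ∀ w ∈ W, ∀ φ : FreeGroup ℕ →* G, φ w = 1

/-- The set of isomorphism types of `n`-marked `V`-groups, as a subset of the space `G_n` of
isomorphism types of `n`-marked groups (`V` is the variety determined by `W`). -/
def markedVGroups (n : ℕ) (W : Set (FreeGroup ℕ)) : Set (GC (Fin n)) :=
  {S : GC (Fin n) |
    ∃ (M : Type) (_ : Group M) (_ : (grpL[[Fin n]]).Structure M),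
      (∀ x y : M, gmul (Fin n) x y = x * y) ∧ (∀ x : M, ginv (Fin n) x = x⁻¹) ∧
      gone (Fin n) M = 1 ∧
      (grpL[[Fin n]]).IsMinimal M ∧ InVariety W M ∧ S.1.1 = (grpL[[Fin n]]).qf M}

/-- The verbal subgroup `V(F_n)` of the free group of rank `n` determined by the set of
identities `W`: the (normal) subgroup generated by all images `φ w`, `w ∈ W`,
`φ : F_∞ → F_n` a homomorphism. -/
def verbalSubgroup (n : ℕ) (W : Set (FreeGroup ℕ)) : Subgroup (FreeGroup (Fin n)) :=
  Subgroup.normalClosure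
    {x : FreeGroup (Fin n) | ∃ w ∈ W, ∃ φ : FreeGroup ℕ →* FreeGroup (Fin n), φ w = x}

instance (n : ℕ) (W : Set (FreeGroup ℕ)) : (verbalSubgroup n W).Normal :=
  Subgroup.normalClosure_normal

/-- The relatively free group of rank `n` in the variety determined by `W`,
namely `F_n / V(F_n)`. -/
abbrev relativelyFree (n : ℕ) (W : Set (FreeGroup ℕ)) : Type :=
  FreeGroup (Fin n) ⧸ verbalSubgroup n W

/-- A group is finitely presented if it is isomorphic to the quotient of a finitely generated
free group by the normal closure of a finite set. -/
def IsFinitelyPresentedGroup (G : Type*) [Group G] : Prop :=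
  ∃ (m : ℕ) (rels : Finset (FreeGroup (Fin m))),
    Nonempty (G ≃* FreeGroup (Fin m) ⧸ Subgroup.normalClosure (rels : Set (FreeGroup (Fin m))))

/-! A marked group `(G, s)` generated by `s` satisfies the quantifier-free sentence `w = 1`
exactly when `w` lies in the kernel `N` of `FreeGroup.lift s`, and it lies in the variety iff
`V(F_n) ≤ N`. Hence the marked `V`-groups form the intersection of the clopen sets `U_{w = 1}`,
`w ∈ V(F_n)`: a closed set, which is open as soon as finitely many `w` normally generate
`V(F_n)`. Conversely, `F_n / V(F_n)` is the limit of the marked groups `F_n / ⟨⟨T⟩⟩` for finite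
`T ⊆ V(F_n)`; if the set is open, one of them is a `V`-group, so that `V(F_n) = ⟨⟨T⟩⟩`. Finite
presentability of `F_n / N` does not depend on the choice of finitely many generators
(B. H. Neumann), so it amounts to `N` being finitely normally generated. -/

open Function Filter Topology

instance (C : Type) (k : ℕ) : IsEmpty ((grpL[[C]]).Relations k) :=
  ⟨fun r => by rcases r with r | r <;> exact r.elim⟩

noncomputable def marking (C : Type) {M : Type} [(grpL[[C]]).Structure M] (c : C) : M :=
  Structure.funMap (L := grpL[[C]]) (Sum.inr c : (grpL[[C]]).Functions 0) ![]

@[reducible]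
noncomputable def markStructure (C : Type) (G : Type) [Group G] (s : C → G) :
    (grpL[[C]]).Structure G where
  funMap {k} f v :=
    match k, f, v with
    | 0, Sum.inl _, _ => 1
    | 0, Sum.inr c, _ => s c
    | 1, Sum.inl _, v => (v 0)⁻¹
    | 2, Sum.inl _, v => v 0 * v 1
    | (_+3), Sum.inl f, _ => f.elim
    | (_+1), Sum.inr c, _ => c.elim
  RelMap r _ := isEmptyElim r

section MarkedGroup

variable {C G H : Type} [Group G] [Group H]

theorem structure_eq_markStructure [str : (grpL[[C]]).Structure G]
    (hm : ∀ x y : G, gmul C x y = x * y) (hi : ∀ x : G, ginv C x = x⁻¹) (ho : gone C G = 1) :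
    str = markStructure C G (marking C) := by
  obtain ⟨funMap, relMap⟩ := str
  congr
  · funext k f v
    rcases f with f | c
    · match k, f with
      | 0, () => exact (congrArg _ (Subsingleton.elim _ _)).trans ho
      | 1, () => exact (congrArg _ (by ext i; fin_cases i; rfl)).trans (hi (v 0))
      | 2, () => exact (congrArg _ (by ext i; fin_cases i <;> rfl)).trans (hm (v 0) (v 1))
    · match k, c with
      | 0, c => exact congrArg _ (Subsingleton.elim _ _)
  · funext k r
    exact isEmptyElim r

noncomputable def markHom (f : G →* H) {s : C → G} {t : C → H} (hf : ∀ c, f (s c) = t c) :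
    @Hom (grpL[[C]]) G H (markStructure C G s) (markStructure C H t) :=
  letI := markStructure C G s
  letI := markStructure C H t
  { toFun := f
    map_fun' := by
      rintro k (g | c) v
      · match k, g with
        | 0, () => exact map_one f
        | 1, () => exact map_inv f _
        | 2, () => exact map_mul f _ _
      · match k, c with
        | 0, c => exact hf c
    map_rel' := fun r => isEmptyElim r }

theorem isGroupReduct_markStructure (s : C → G) : @IsGroupReduct C G (markStructure C G s) :=
  ⟨mul_assoc, one_mul, mul_one, inv_mul_cancel, mul_inv_cancel⟩

noncomputable def wordOf {α : Type} [IsEmpty α] (t : (grpL[[C]]).Term α) : FreeGroup C :=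
  @Term.realize _ _ (markStructure C _ FreeGroup.of) _ isEmptyElim t

theorem realize_markStructure {α : Type} [IsEmpty α] (s : C → G) (v : α → G)
    (t : (grpL[[C]]).Term α) :
    @Term.realize _ _ (markStructure C G s) _ v t = FreeGroup.lift s (wordOf t) := by
  let _ := markStructure C G s
  let _ := markStructure C _ (FreeGroup.of (α := C))
  have hv : v = markHom (FreeGroup.lift s) (s := FreeGroup.of) (t := s) (by simp) ∘ isEmptyElim :=
    funext isEmptyElim
  rw [hv, HomClass.realize_term]
  rfl

theorem exists_wordOf_eq (α : Type) [IsEmpty α] (g : FreeGroup C) :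
    ∃ t : (grpL[[C]]).Term α, wordOf t = g := by
  induction g using FreeGroup.induction_on with
  | C1 => exact ⟨Term.func (Sum.inl (α := grpL.Functions 0) (() : grpFun 0)) ![], rfl⟩
  | of c => exact ⟨Term.func (Sum.inr c : (grpL[[C]]).Functions 0) ![], rfl⟩
  | inv_of c ih =>
    obtain ⟨t, ht⟩ := ih
    exact ⟨Term.func (Sum.inl (α := grpL.Functions 1) (() : grpFun 1)) ![t],
      congrArg (·⁻¹) ht⟩
  | mul g h ihg ihh =>
    obtain ⟨t₁, rfl⟩ := ihg
    obtain ⟨t₂, rfl⟩ := ihh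
    exact ⟨Term.func (Sum.inl (α := grpL.Functions 2) (() : grpFun 2)) ![t₁, t₂], rfl⟩

theorem isMinimal_markStructure_iff (s : C → G) :
    @IsMinimal (grpL[[C]]) G (markStructure C G s) ↔ Surjective (FreeGroup.lift s) := by
  let _ := markStructure C G s
  have hclosure : ∀ x : G,
      x ∈ Substructure.closure (grpL[[C]]) ∅ ↔ ∃ g, FreeGroup.lift s g = x := by
    intro x
    rw [Substructure.mem_closure_iff_exists_term]
    constructor
    · rintro ⟨t, rfl⟩
      exact ⟨wordOf t, (realize_markStructure s _ t).symm⟩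
    · rintro ⟨g, rfl⟩
      obtain ⟨t, rfl⟩ := exists_wordOf_eq (∅ : Set G) g
      exact ⟨t, realize_markStructure s _ t⟩
  simp only [IsMinimal, ← SetLike.coe_set_eq, Substructure.coe_top, Set.eq_univ_iff_forall,
    SetLike.mem_coe, hclosure, Surjective]

end MarkedGroup

section Sentences

variable {C G : Type} [Group G]

noncomputable def termOf (g : FreeGroup C) : (grpL[[C]]).Term (Empty ⊕ Fin 0) :=
  (exists_wordOf_eq _ g).choose

theorem wordOf_termOf (g : FreeGroup C) : wordOf (termOf g) = g :=
  (exists_wordOf_eq _ g).choose_spec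

noncomputable def eqOneSentence (g : FreeGroup C) : (grpL[[C]]).Sentence :=
  (termOf g).bdEqual (termOf 1)

theorem isQF_eqOneSentence (g : FreeGroup C) : (eqOneSentence g).IsQF :=
  (BoundedFormula.IsAtomic.equal _ _).isQF

theorem realize_bdEqual_markStructure (s : C → G)
    (t₁ t₂ : (grpL[[C]]).Term (Empty ⊕ Fin 0)) :
    @Sentence.Realize _ G (markStructure C G s) (t₁.bdEqual t₂) ↔
      FreeGroup.lift s (wordOf t₁) = FreeGroup.lift s (wordOf t₂) := by
  simp only [Sentence.Realize, Formula.Realize, BoundedFormula.realize_bdEqual,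
    realize_markStructure]

theorem eqOneSentence_mem_qf_iff (s : C → G) (g : FreeGroup C) :
    eqOneSentence g ∈ @qf (grpL[[C]]) G (markStructure C G s) ↔ FreeGroup.lift s g = 1 := by
  rw [qf, Set.mem_ofPred_eq, and_iff_right (isQF_eqOneSentence g), eqOneSentence,
    realize_bdEqual_markStructure, wordOf_termOf, wordOf_termOf, map_one]

theorem ker_lift_eq_of_qf_eq {G' : Type} [Group G'] {s : C → G} {s' : C → G'}
    (h : @qf _ G (markStructure C G s) = @qf _ G' (markStructure C G' s')) :
    (FreeGroup.lift s).ker = (FreeGroup.lift s').ker := by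
  ext g
  rw [MonoidHom.mem_ker, MonoidHom.mem_ker, ← eqOneSentence_mem_qf_iff, h,
    eqOneSentence_mem_qf_iff]

end Sentences

section Variety

variable {n : ℕ} {W : Set (FreeGroup ℕ)} {G : Type} [Group G]

theorem inVariety_iff_verbalSubgroup_le_ker {s : Fin n → G} (hs : Surjective (FreeGroup.lift s)) :
    InVariety W G ↔ verbalSubgroup n W ≤ (FreeGroup.lift s).ker := by
  constructor
  · intro hW
    refine Subgroup.normalClosure_le_normal ?_
    rintro _ ⟨w, hw, φ, rfl⟩
    exact hW w hw ((FreeGroup.lift s).comp φ)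
  · intro hle w hw φ
    choose t ht using fun k => hs (φ (FreeGroup.of k))
    have hφ : (FreeGroup.lift s).comp (FreeGroup.lift t) = φ :=
      FreeGroup.ext_hom _ _ (by simp [ht])
    rw [← hφ]
    exact hle (Subgroup.subset_normalClosure ⟨w, hw, FreeGroup.lift t, rfl⟩)

end Variety

@[reducible]
noncomputable def groupOfReduct {C M : Type} [(grpL[[C]]).Structure M]
    (h : IsGroupReduct C M) : Group M :=
  letI : Mul M := ⟨gmul C⟩
  letI : One M := ⟨gone C M⟩
  letI : Inv M := ⟨ginv C⟩
  Group.ofLeftAxioms h.1 h.2.1 h.2.2.2.1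

theorem exists_markStructure_of_mem_GC {C : Type} {S : SL (grpL[[C]])} (hS : S ∈ GC C) :
    ∃ (G : Type) (_ : Group G) (s : C → G), Surjective (FreeGroup.lift s) ∧
      S.1 = @qf _ G (markStructure C G s) := by
  obtain ⟨M, str, hmin, hred, hqf⟩ := hS
  let _ := groupOfReduct hred
  have hstr := structure_eq_markStructure (C := C) (G := M) (fun _ _ => rfl) (fun _ => rfl) rfl
  rw [hstr] at hmin hqf
  exact ⟨M, _, marking C, (isMinimal_markStructure_iff _).1 hmin, hqf⟩

section Membership

variable {n : ℕ} {W : Set (FreeGroup ℕ)}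

theorem mem_markedVGroups_iff_exists (S : GC (Fin n)) :
    S ∈ markedVGroups n W ↔ ∃ (G : Type) (_ : Group G) (s : Fin n → G),
      Surjective (FreeGroup.lift s) ∧ InVariety W G ∧
        S.1.1 = @qf _ G (markStructure _ G s) := by
  constructor
  · rintro ⟨M, _, str, hm, hi, ho, hmin, hW, hqf⟩
    have hstr := structure_eq_markStructure hm hi ho
    rw [hstr] at hmin hqf
    exact ⟨M, _, marking _, (isMinimal_markStructure_iff _).1 hmin, hW, hqf⟩
  · rintro ⟨G, _, s, hs, hW, hqf⟩
    exact ⟨G, _, markStructure _ G s, fun _ _ => rfl, fun _ => rfl, rfl,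
      (isMinimal_markStructure_iff s).2 hs, hW, hqf⟩

theorem mem_markedVGroups_iff_le_ker {S : GC (Fin n)} {G : Type} [Group G] {s : Fin n → G}
    (hs : Surjective (FreeGroup.lift s)) (hqf : S.1.1 = @qf _ G (markStructure _ G s)) :
    S ∈ markedVGroups n W ↔ verbalSubgroup n W ≤ (FreeGroup.lift s).ker := by
  rw [mem_markedVGroups_iff_exists]
  constructor
  · rintro ⟨G', _, s', hs', hW, hqf'⟩
    rw [ker_lift_eq_of_qf_eq (hqf.symm.trans hqf')]
    exact (inVariety_iff_verbalSubgroup_le_ker hs').1 hW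
  · intro hle
    exact ⟨G, _, s, hs, (inVariety_iff_verbalSubgroup_le_ker hs).2 hle, hqf⟩

theorem mem_markedVGroups_iff {T : Set (FreeGroup (Fin n))}
    (hT : Subgroup.normalClosure T = verbalSubgroup n W) (S : GC (Fin n)) :
    S ∈ markedVGroups n W ↔ ∀ g ∈ T, eqOneSentence g ∈ S.1.1 := by
  obtain ⟨G, _, s, hs, hqf⟩ := exists_markStructure_of_mem_GC S.2
  rw [mem_markedVGroups_iff_le_ker hs hqf, ← hT, ← Subgroup.normalClosure_subset_iff, hqf]
  simp only [eqOneSentence_mem_qf_iff, Set.subset_def, SetLike.mem_coe, MonoidHom.mem_ker]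

end Membership

section Topology

theorem isOpen_USet {L : FirstOrder.Language} {φ : L.Sentence} (hφ : φ.IsQF) :
    IsOpen (USet φ) :=
  TopologicalSpace.GenerateOpen.basic _ ⟨φ, hφ, rfl⟩

theorem compl_USet {L : FirstOrder.Language} {φ : L.Sentence} (hφ : φ.IsQF) :
    (USet φ)ᶜ = USet φ.not := by
  ext ⟨S, M, _, -, rfl⟩
  show ¬(φ.IsQF ∧ M ⊨ φ) ↔ φ.not.IsQF ∧ M ⊨ φ.not
  rw [and_iff_right hφ, and_iff_right hφ.not, Sentence.realize_not]

theorem isClopen_USet {L : FirstOrder.Language} {φ : L.Sentence} (hφ : φ.IsQF) :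
    IsClopen (USet φ) :=
  ⟨⟨by rw [compl_USet hφ]; exact isOpen_USet hφ.not⟩, isOpen_USet hφ⟩

variable {n : ℕ} {W : Set (FreeGroup ℕ)}

theorem markedVGroups_eq_preimage {T : Set (FreeGroup (Fin n))}
    (hT : Subgroup.normalClosure T = verbalSubgroup n W) :
    markedVGroups n W = Subtype.val ⁻¹' ⋂ g ∈ T, USet (eqOneSentence g) := by
  ext S
  rw [Set.mem_preimage, Set.mem_iInter₂]
  exact mem_markedVGroups_iff hT S

theorem isClosed_markedVGroups : IsClosed (markedVGroups n W) := by
  rw [markedVGroups_eq_preimage (Subgroup.normalClosure_eq_self _)]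
  exact (isClosed_biInter fun g _ => (isClopen_USet (isQF_eqOneSentence g)).isClosed).preimage
    continuous_subtype_val

theorem isOpen_markedVGroups_of_isFinitelyNormallyGenerated
    (h : (verbalSubgroup n W).IsFinitelyNormallyGenerated) : IsOpen (markedVGroups n W) := by
  obtain ⟨T, hfin, hT⟩ := h
  rw [markedVGroups_eq_preimage hT]
  exact (hfin.isOpen_biInter fun g _ => (isClopen_USet (isQF_eqOneSentence g)).isOpen).preimage
    continuous_subtype_val

end Topology

section QuotientPoints

variable {C : Type}

noncomputable instance (N : Subgroup (FreeGroup C)) [N.Normal] :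
    (grpL[[C]]).Structure (FreeGroup C ⧸ N) :=
  markStructure C _ fun c => (FreeGroup.of c : FreeGroup C ⧸ N)

theorem lift_of_quotient (N : Subgroup (FreeGroup C)) [N.Normal] :
    FreeGroup.lift (fun c => (FreeGroup.of c : FreeGroup C ⧸ N)) = QuotientGroup.mk' N :=
  FreeGroup.ext_hom _ _ fun c => by simp

theorem isMinimal_quotient (N : Subgroup (FreeGroup C)) [N.Normal] :
    (grpL[[C]]).IsMinimal (FreeGroup C ⧸ N) := by
  refine (isMinimal_markStructure_iff _).2 ?_
  rw [lift_of_quotient]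
  exact QuotientGroup.mk'_surjective N

noncomputable def quotPoint (N : Subgroup (FreeGroup C)) [N.Normal] : GC C :=
  ⟨⟨qf _ (FreeGroup C ⧸ N), _, _, isMinimal_quotient N, rfl⟩,
    _, _, isMinimal_quotient N, isGroupReduct_markStructure _, rfl⟩

theorem realize_bdEqual_quotient (N : Subgroup (FreeGroup C)) [N.Normal]
    (t₁ t₂ : (grpL[[C]]).Term (Empty ⊕ Fin 0)) :
    (FreeGroup C ⧸ N) ⊨ t₁.bdEqual t₂ ↔ (wordOf t₁)⁻¹ * wordOf t₂ ∈ N := by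
  refine (realize_bdEqual_markStructure _ t₁ t₂).trans ?_
  rw [lift_of_quotient, QuotientGroup.mk'_apply, QuotientGroup.mk'_apply, QuotientGroup.eq]

theorem quotPoint_mem_markedVGroups_iff {n : ℕ} {W : Set (FreeGroup ℕ)}
    (N : Subgroup (FreeGroup (Fin n))) [N.Normal] :
    quotPoint N ∈ markedVGroups n W ↔ verbalSubgroup n W ≤ N := by
  rw [mem_markedVGroups_iff_le_ker (s := fun c => (FreeGroup.of c : FreeGroup (Fin n) ⧸ N))
    (by rw [lift_of_quotient]; exact QuotientGroup.mk'_surjective N) rfl,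
    lift_of_quotient, QuotientGroup.ker_mk']

end QuotientPoints

theorem eventually_realize_iff_of_isQF {L : FirstOrder.Language} {ι : Type*} {l : Filter ι}
    {M : ι → Type*} [∀ i, L.Structure (M i)] {N : Type*} [L.Structure N]
    (h : ∀ φ : L.Sentence, φ.IsAtomic → ∀ᶠ i in l, (M i ⊨ φ ↔ N ⊨ φ))
    {φ : L.Sentence} (hφ : φ.IsQF) : ∀ᶠ i in l, (M i ⊨ φ ↔ N ⊨ φ) := by
  induction hφ with
  | falsum => exact Eventually.of_forall fun _ => Iff.rfl
  | of_isAtomic hφ => exact h _ hφ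
  | imp _ _ ih₁ ih₂ =>
    filter_upwards [ih₁, ih₂] with i h₁ h₂
    exact imp_congr h₁ h₂

theorem tendsto_quotPoint {C ι : Type} {l : Filter ι} (K : ι → Subgroup (FreeGroup C))
    [∀ i, (K i).Normal] (N : Subgroup (FreeGroup C)) [N.Normal] (hle : ∀ i, K i ≤ N)
    (hK : ∀ g ∈ N, ∀ᶠ i in l, g ∈ K i) :
    Tendsto (fun i => quotPoint (K i)) l (𝓝 (quotPoint N)) := by
  have hatomic : ∀ φ : (grpL[[C]]).Sentence, φ.IsAtomic →
      ∀ᶠ i in l, ((FreeGroup C ⧸ K i) ⊨ φ ↔ (FreeGroup C ⧸ N) ⊨ φ) := by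
    rintro _ (⟨t₁, t₂⟩ | ⟨R, _⟩)
    · simp only [realize_bdEqual_quotient]
      by_cases hw : (wordOf t₁)⁻¹ * wordOf t₂ ∈ N
      · filter_upwards [hK _ hw] with i hi using iff_of_true hi hw
      · exact Eventually.of_forall fun i => iff_of_false (fun hi => hw (hle i hi)) hw
    · exact isEmptyElim R
  refine tendsto_subtype_rng.2 (TopologicalSpace.tendsto_nhds_generateFrom_iff.2 ?_)
  rintro _ ⟨φ, hφ, rfl⟩ ⟨-, hN⟩
  filter_upwards [eventually_realize_iff_of_isQF hatomic hφ] with i hi using ⟨hφ, hi.2 hN⟩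

theorem isFinitelyNormallyGenerated_of_isOpen {n : ℕ} {W : Set (FreeGroup ℕ)}
    (h : IsOpen (markedVGroups n W)) : (verbalSubgroup n W).IsFinitelyNormallyGenerated := by
  set V := verbalSubgroup n W
  let K : Finset V → Subgroup (FreeGroup (Fin n)) :=
    fun T => Subgroup.normalClosure ((↑) '' (T : Set V))
  have hKV : ∀ T, K T ≤ V := fun T =>
    Subgroup.normalClosure_le_normal (by rintro _ ⟨g, -, rfl⟩; exact g.2)
  have hK : Tendsto (fun T => quotPoint (K T)) atTop (𝓝 (quotPoint V)) := by
    refine tendsto_quotPoint K V hKV fun g hg => ?_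
    filter_upwards [eventually_ge_atTop {⟨g, hg⟩}] with T hT
    exact Subgroup.subset_normalClosure ⟨_, hT (Finset.mem_singleton_self _), rfl⟩
  obtain ⟨T, hT⟩ :=
    (hK.eventually (h.mem_nhds ((quotPoint_mem_markedVGroups_iff V).2 le_rfl))).exists
  exact ⟨_, T.finite_toSet.image _,
    le_antisymm (hKV T) ((quotPoint_mem_markedVGroups_iff (K T)).1 hT)⟩

theorem Subgroup.IsFinitelyNormallyGenerated.ker_of_surjective {α β H : Type*} [Finite β]
    [Group H]
    {π : FreeGroup α →* H} (hπ : Surjective π) (hker : π.ker.IsFinitelyNormallyGenerated)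
    {q : FreeGroup β →* H} (hq : Surjective q) : q.ker.IsFinitelyNormallyGenerated := by
  obtain ⟨R, hR, hRker⟩ := hker
  choose a ha using fun x => hq (π (FreeGroup.of x))
  choose b hb using fun y => hπ (q (FreeGroup.of y))
  have hqa : q.comp (FreeGroup.lift a) = π := FreeGroup.ext_hom _ _ (by simp [ha])
  have hπb : π.comp (FreeGroup.lift b) = q := FreeGroup.ext_hom _ _ (by simp [hb])
  set c := (FreeGroup.lift a).comp (FreeGroup.lift b)
  set T := FreeGroup.lift a '' R ∪ Set.range fun y => (FreeGroup.of y)⁻¹ * c (FreeGroup.of y)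
  refine ⟨T, (hR.image _).union (Set.finite_range _), le_antisymm ?_ ?_⟩
  · refine Subgroup.normalClosure_le_normal ?_
    rintro _ (⟨r, hr, rfl⟩ | ⟨y, rfl⟩)
    · rw [SetLike.mem_coe, MonoidHom.mem_ker, ← MonoidHom.comp_apply, hqa, ← MonoidHom.mem_ker,
        ← hRker]
      exact Subgroup.subset_normalClosure hr
    · rw [SetLike.mem_coe, MonoidHom.mem_ker, map_mul, map_inv, ← MonoidHom.comp_apply,
        ← MonoidHom.comp_assoc, hqa, hπb, inv_mul_cancel]
  · set K := Subgroup.normalClosure T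
    have hc : (QuotientGroup.mk' K).comp c = QuotientGroup.mk' K := by
      refine FreeGroup.ext_hom _ _ fun y => ?_
      rw [MonoidHom.comp_apply, QuotientGroup.mk'_apply, QuotientGroup.mk'_apply, eq_comm,
        QuotientGroup.eq]
      exact Subgroup.subset_normalClosure (Or.inr ⟨y, rfl⟩)
    have hRK : π.ker ≤ K.comap (FreeGroup.lift a) := by
      rw [← hRker]
      exact Subgroup.normalClosure_le_normal fun r hr =>
        Subgroup.subset_normalClosure (Or.inl ⟨r, hr, rfl⟩)
    -- modulo `K`, `a ∘ b` is the identity and `a` kills `ker π`, so `z ≡ a (b z) ≡ 1`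
    intro z hz
    have hbz : FreeGroup.lift b z ∈ π.ker := by
      rwa [MonoidHom.mem_ker, ← MonoidHom.comp_apply, hπb]
    rw [← QuotientGroup.eq_one_iff, ← QuotientGroup.mk'_apply, ← hc, MonoidHom.comp_apply,
      QuotientGroup.mk'_apply, QuotientGroup.eq_one_iff]
    exact hRK hbz

theorem isFinitelyPresentedGroup_quotient_iff {n : ℕ} (N : Subgroup (FreeGroup (Fin n)))
    [N.Normal] :
    IsFinitelyPresentedGroup (FreeGroup (Fin n) ⧸ N) ↔ N.IsFinitelyNormallyGenerated := by
  constructor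
  · rintro ⟨m, rels, ⟨e⟩⟩
    let q := e.toMonoidHom.comp (QuotientGroup.mk' N)
    have hq : Surjective q := by
      rw [MonoidHom.coe_comp]
      exact e.surjective.comp (QuotientGroup.mk'_surjective N)
    have hπ : (QuotientGroup.mk' (Subgroup.normalClosure (rels : Set (FreeGroup (Fin m))))).ker
        |>.IsFinitelyNormallyGenerated :=
      ⟨rels, rels.finite_toSet, (QuotientGroup.ker_mk' _).symm⟩
    have h := Subgroup.IsFinitelyNormallyGenerated.ker_of_surjective
      (QuotientGroup.mk'_surjective _) hπ hq
    have hkq : q.ker = N := by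
      ext g
      simp [q]
    rwa [hkq] at h
  · rintro ⟨T, hT, hTN⟩
    refine ⟨n, hT.toFinset, ⟨QuotientGroup.quotientMulEquivOfEq ?_⟩⟩
    rw [Set.Finite.coe_toFinset, hTN]

theorem markedVGroups_isClopen_iff_general (n : ℕ) (W : Set (FreeGroup ℕ)) :
    IsClopen (markedVGroups n W) ↔ IsFinitelyPresentedGroup (relativelyFree n W) := by
  rw [isFinitelyPresentedGroup_quotient_iff]
  exact ⟨fun h => isFinitelyNormallyGenerated_of_isOpen h.isOpen,
    fun h => ⟨isClosed_markedVGroups, isOpen_markedVGroups_of_isFinitelyNormallyGenerated h⟩⟩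

/-- **Corollary 2.8.** For a group variety `V` (determined by a set of identities `W`) and
`n ≥ 1`, the set of isomorphism types of `n`-marked `V`-groups is clopen in `G_n` if and only
if the relatively free group of rank `n` in `V` is finitely presented. -/
theorem markedVGroups_isClopen_iff (n : ℕ) (hn : 1 ≤ n) (W : Set (FreeGroup ℕ)) :
    IsClopen (markedVGroups n W) ↔ IsFinitelyPresentedGroup (relativelyFree n W) :=
  markedVGroups_isClopen_iff_general n W
end

section
/- Let X be a set of minimal L-structures and M a minimal L-structure that is not isomorphic to any member of X. The following are equivalent: (1) every open neighborhood of qf(M) in the Stone topology on S_L contains qf(N) for some N ∈ X; (2) M is isomorphic to the core (the substructure generated by the empty set) of an ultraproduct ∏_{i∈I} M_i / D, where (M_i)_{i∈I} is a family of pairwise non-isomorphic structures from X and D is a non-principal ultrafilter on I; (3) M embeds into such an ultraproduct of pairwise non-isomorphic structures from X over a non-principal ultrafilter. -/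
open FirstOrder FirstOrder.Language

universe u v

/-!
A minimal structure is generated by the values of closed terms, so its quantifier-free theory
determines it: if `qf(M) ⊆ qf(P)` with `M` minimal, then the two theories coincide and evaluating
closed terms identifies `M` with the core of `P`. In particular distinct points of `S_L` are
separated by some `U_φ`, so `S_L` is T1. By Łoś, a quantifier-free sentence holds in an
ultraproduct iff it holds in almost every factor. Condition (1) says that `qf(M)` lies in the
closure of the points `qf(N)`, `N ∈ X`, none of which equals it; in a T1 space such a point is
the limit of a non-principal ultrafilter on those points, and the ultraproduct along it satisfies
`qf(M)`, which gives (2). Conversely, an embedding as in (3) carries each basic neighbourhood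
`U_φ` of `qf(M)` to the ultraproduct, hence to some factor.
-/

open Filter Topology Set TopologicalSpace

namespace FirstOrder.Language

open Structure

variable {L : Language.{u, v}} {M : Type*} {P : Type*} [L.Structure M] [L.Structure P]

theorem BoundedFormula.IsQF.realize_sentence_embedding {φ : L.Sentence} (hφ : φ.IsQF)
    (g : M ↪[L] P) : P ⊨ φ ↔ M ⊨ φ := by
  have := hφ.realize_embedding g (v := default) (xs := default)
  rwa [Subsingleton.elim (g ∘ default) default, Subsingleton.elim (g ∘ default) default] at this

theorem Embedding.qf_eq (g : M ↪[L] P) : L.qf M = L.qf P :=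
  Set.ext fun _ => and_congr_right fun hφ => (hφ.realize_sentence_embedding g).symm

theorem qf_eq_of_subset (h : L.qf M ⊆ L.qf P) : L.qf M = L.qf P := by
  refine h.antisymm fun φ ⟨hφ, hPφ⟩ => ⟨hφ, ?_⟩
  by_contra hMφ
  exact (h ⟨hφ.not, hMφ⟩).2 hPφ

theorem realize_sentence_iff_of_qf_eq (h : L.qf M = L.qf P) {φ : L.Sentence} (hφ : φ.IsQF) :
    M ⊨ φ ↔ P ⊨ φ :=
  and_congr_right_iff.1 (Set.ext_iff.1 h φ) hφ

theorem IsMinimal.exists_term_realize_eq (hM : L.IsMinimal M) (x : M) :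
    ∃ t : L.Term Empty, t.realize (default : Empty → M) = x := by
  obtain ⟨t, rfl⟩ := Substructure.mem_closure_iff_exists_term.1 (hM ▸ Substructure.mem_top x)
  exact ⟨t.relabel isEmptyElim, by rw [Term.realize_relabel]; congr 1; exact Subsingleton.elim _ _⟩

theorem realize_term_eq_iff_of_qf_eq (h : L.qf M = L.qf P) (t₁ t₂ : L.Term Empty) :
    t₁.realize (default : Empty → M) = t₂.realize default ↔
      t₁.realize (default : Empty → P) = t₂.realize default := by
  have hφ : (t₁.equal t₂ : L.Sentence).IsQF := (BoundedFormula.IsAtomic.equal _ _).isQF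
  simpa only [Sentence.Realize, Formula.realize_equal] using realize_sentence_iff_of_qf_eq h hφ

theorem relMap_realize_iff_of_qf_eq (h : L.qf M = L.qf P) {n : ℕ} (r : L.Relations n)
    (ts : Fin n → L.Term Empty) :
    RelMap r (fun i => (ts i).realize (default : Empty → M)) ↔
      RelMap r (fun i => (ts i).realize (default : Empty → P)) := by
  have hφ : (r.formula ts : L.Sentence).IsQF := (BoundedFormula.IsAtomic.rel _ _).isQF
  simpa only [Sentence.Realize, Formula.realize_rel] using realize_sentence_iff_of_qf_eq h hφ

noncomputable def IsMinimal.embeddingOfQfEq (hM : L.IsMinimal M) (h : L.qf M = L.qf P) :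
    M ↪[L] P := by
  choose T hT using hM.exists_term_realize_eq
  refine ⟨⟨fun x => (T x).realize default, fun x y hxy => ?_⟩, fun f xs => ?_, fun r xs => ?_⟩
  · rw [← hT x, ← hT y]
    exact (realize_term_eq_iff_of_qf_eq h _ _).2 hxy
  · have hfun : (T (funMap f xs)).realize default =
        (Term.func f fun i => T (xs i)).realize (default : Empty → M) := by
      simp only [Term.realize, hT]
    simpa only [Term.realize, Function.comp_def] using (realize_term_eq_iff_of_qf_eq h _ _).1 hfun
  · simpa only [hT, Function.comp_def] using (relMap_realize_iff_of_qf_eq h r fun i => T (xs i)).symm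

theorem IsMinimal.nonempty_equiv_closure_empty_of_qf_eq (hM : L.IsMinimal M)
    (h : L.qf M = L.qf P) : Nonempty (M ≃[L] Substructure.closure L (∅ : Set P)) := by
  let g := hM.embeddingOfQfEq h
  have hrange : g.toHom.range = Substructure.closure L (∅ : Set P) := by
    rw [Hom.range_eq_map, ← hM, Substructure.map_closure, Set.image_empty]
  exact ⟨hrange ▸ g.equivRange⟩

theorem IsMinimal.nonempty_equiv_of_qf_eq (hM : L.IsMinimal M) (hP : L.IsMinimal P)
    (h : L.qf M = L.qf P) : Nonempty (M ≃[L] P) := by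
  obtain ⟨e⟩ := hM.nonempty_equiv_closure_empty_of_qf_eq h
  rw [hP] at e
  exact ⟨Substructure.topEquiv.comp e⟩

theorem Ultraproduct.mem_qf_iff {α : Type*} {N : α → Type*} [∀ a, L.Structure (N a)]
    [∀ a, Nonempty (N a)] {D : Ultrafilter α} {φ : L.Sentence} (hφ : φ.IsQF) :
    φ ∈ L.qf ((D : Filter α).Product N) ↔ ∀ᶠ a in D, φ ∈ L.qf (N a) := by
  simp only [qf, Set.mem_ofPred_eq, hφ, true_and, Ultraproduct.sentence_realize]

end FirstOrder.Language

theorem exists_ultrafilter_tendsto_of_mem_closure {X : Type*} [TopologicalSpace X] [T1Space X]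
    {x : X} {s : Set X} (hx : x ∈ closure s) (hxs : x ∉ s) :
    ∃ D : Ultrafilter s, (∀ t : Set s, t.Finite → t ∉ D) ∧ Tendsto ((↑) : s → X) D (𝓝 x) := by
  have := mem_closure_iff_comap_neBot.1 hx
  have hcof : comap ((↑) : s → X) (𝓝 x) ≤ cofinite := by
    refine le_cofinite_iff_compl_singleton_mem.2 fun y => ?_
    have : {(y : X)}ᶜ ∈ 𝓝 x := compl_singleton_mem_nhds (ne_of_mem_of_not_mem y.2 hxs).symm
    exact mem_comap.2 ⟨_, this, fun z hz hzy => hz (congrArg Subtype.val hzy)⟩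
  refine ⟨Ultrafilter.of _, fun t ht htD => ?_, tendsto_iff_comap.2 (Ultrafilter.of_le _)⟩
  exact Ultrafilter.compl_mem_iff_notMem.1 (Ultrafilter.of_le _ (hcof ht.compl_mem_cofinite)) htD

namespace SL

variable {L : FirstOrder.Language.{u, v}}

def mk (M : Type (max u v)) [L.Structure M] (hM : L.IsMinimal M) : SL L :=
  ⟨L.qf M, M, inferInstance, hM, rfl⟩

theorem mk_eq_mk_iff {M P : Type (max u v)} [L.Structure M] [L.Structure P]
    {hM : L.IsMinimal M} {hP : L.IsMinimal P} : mk M hM = mk P hP ↔ L.qf M = L.qf P :=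
  Subtype.ext_iff

theorem isOpen_uSet {φ : L.Sentence} (hφ : φ.IsQF) : IsOpen (USet φ) :=
  GenerateOpen.basic _ ⟨φ, hφ, rfl⟩

theorem uSet_inf {φ ψ : L.Sentence} (hφ : φ.IsQF) (hψ : ψ.IsQF) :
    USet (φ ⊓ ψ) = USet φ ∩ USet ψ := by
  ext ⟨_, M, _, -, rfl⟩
  show φ ⊓ ψ ∈ L.qf M ↔ φ ∈ L.qf M ∧ ψ ∈ L.qf M
  simp only [qf, Sentence.Realize, mem_ofPred_eq, hφ.inf hψ, Formula.realize_inf, true_and, hφ, hψ]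

theorem uSet_top : USet (⊤ : L.Sentence) = univ := by
  ext ⟨_, M, _, -, rfl⟩
  exact iff_of_true ⟨.top, Formula.realize_top.2 trivial⟩ trivial

theorem isTopologicalBasis :
    IsTopologicalBasis {V : Set (SL L) | ∃ φ : L.Sentence, φ.IsQF ∧ V = USet φ} where
  exists_subset_inter := by
    rintro _ ⟨φ, hφ, rfl⟩ _ ⟨ψ, hψ, rfl⟩ S hS
    exact ⟨_, ⟨φ ⊓ ψ, hφ.inf hψ, rfl⟩, uSet_inf hφ hψ ▸ hS, (uSet_inf hφ hψ).subset⟩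
  sUnion_eq := eq_univ_of_univ_subset <| uSet_top ▸ subset_sUnion_of_mem ⟨⊤, .top, rfl⟩
  eq_generateFrom := rfl

instance : T1Space (SL L) := by
  refine t1Space_iff_exists_open.2 ?_
  rintro ⟨_, M, _, hM, rfl⟩ ⟨_, P, _, hP, rfl⟩ hne
  obtain ⟨φ, hφM, hφP⟩ := not_subset.1 fun h => hne (Subtype.ext (qf_eq_of_subset h))
  exact ⟨USet φ, isOpen_uSet hφM.1, hφM, hφP⟩

end SL

/-- **Proposition 2.10.** Let `X = {N i : i ∈ ι}` be a set of minimal `L`-structures and `M` a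
minimal `L`-structure not isomorphic to any member of `X`. The following are equivalent:
(1) every open neighbourhood of `qf(M)` in the Stone topology on `S_L` contains `qf(N)` for
some `N ∈ X`; (2) `M` is isomorphic to the core of a non-principal ultraproduct of pairwise
non-isomorphic structures from `X`; (3) `M` embeds into such an ultraproduct. -/
theorem limit_point_tfae_ultraproduct (L : FirstOrder.Language.{u, v}) [Nonempty L.Constants]
    {ι : Type (max u v)} (N : ι → Type (max u v)) [∀ i, L.Structure (N i)]
    (hN : ∀ i, L.IsMinimal (N i))
    (M : Type (max u v)) [iM : L.Structure M] (hM : L.IsMinimal M)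
    (hiso : ∀ i, IsEmpty (M ≃[L] N i)) :
    List.TFAE
      [∀ U : Set (SL L), IsOpen U → (⟨L.qf M, M, iM, hM, rfl⟩ : SL L) ∈ U →
         ∃ i, (⟨L.qf (N i), N i, inferInstance, hN i, rfl⟩ : SL L) ∈ U,
       ∃ (κ : Type (max u v)) (f : κ → ι) (D : Ultrafilter κ),
         (∀ k k' : κ, k ≠ k' → IsEmpty (N (f k) ≃[L] N (f k'))) ∧
         (∀ s : Set κ, s.Finite → s ∉ D) ∧
         Nonempty
           (M ≃[L]
             Substructure.closure L (∅ : Set ((D : Filter κ).Product fun k => N (f k)))),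
       ∃ (κ : Type (max u v)) (f : κ → ι) (D : Ultrafilter κ),
         (∀ k k' : κ, k ≠ k' → IsEmpty (N (f k) ≃[L] N (f k'))) ∧
         (∀ s : Set κ, s.Finite → s ∉ D) ∧
         Nonempty (M ↪[L] (D : Filter κ).Product fun k => N (f k))] := by
  have : ∀ i, Nonempty (N i) := fun i => nonempty_of_nonempty_constants L (N i)
  let pts : ι → SL L := fun i => SL.mk (N i) (hN i)
  have hM_notMem : SL.mk M hM ∉ range pts := by
    rintro ⟨i, hi⟩
    exact (hiso i).false (hM.nonempty_equiv_of_qf_eq (hN i) (SL.mk_eq_mk_iff.1 hi).symm).some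
  tfae_have 1 → 2 := by
    intro h
    have hcl : SL.mk M hM ∈ closure (range pts) := mem_closure_iff.2 fun U hU hMU =>
      let ⟨i, hi⟩ := h U hU hMU
      ⟨pts i, hi, i, rfl⟩
    obtain ⟨D, hD, hlim⟩ := exists_ultrafilter_tendsto_of_mem_closure hcl hM_notMem
    -- Indexing by the points `qf(N)` rather than by `ι` makes the factors pairwise non-isomorphic.
    have hf : ∀ k, pts (rangeSplitting pts k) = k := apply_rangeSplitting pts
    refine ⟨range pts, rangeSplitting pts, D, fun k k' hne => ⟨fun e => hne ?_⟩, hD, ?_⟩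
    · rw [← Subtype.coe_inj, ← hf k, ← hf k']
      exact SL.mk_eq_mk_iff.2 e.toEmbedding.qf_eq
    · refine hM.nonempty_equiv_closure_empty_of_qf_eq (qf_eq_of_subset fun φ hφ => ?_)
      rw [Ultraproduct.mem_qf_iff hφ.1]
      filter_upwards [hlim ((SL.isOpen_uSet hφ.1).mem_nhds hφ)] with k hk
      rwa [mem_preimage, ← hf k] at hk
  tfae_have 2 → 3 := by
    rintro ⟨κ, f, D, hpair, hD, ⟨e⟩⟩
    exact ⟨κ, f, D, hpair, hD, ⟨(Substructure.subtype _).comp e.toEmbedding⟩⟩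
  tfae_have 3 → 1 := by
    rintro ⟨κ, f, D, -, -, ⟨g⟩⟩ U hU hMU
    obtain ⟨_, ⟨φ, hφ, rfl⟩, hMφ, hφU⟩ := SL.isTopologicalBasis.exists_subset_of_mem_open hMU hU
    have hφP : φ ∈ L.qf ((D : Filter κ).Product fun k => N (f k)) := g.qf_eq ▸ hMφ
    obtain ⟨k, hk⟩ := ((Ultraproduct.mem_qf_iff hφ).1 hφP).exists
    exact ⟨f k, hφU hk⟩
  tfae_finish
end
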